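/- arXiv:1109.5144 — 2 statements merged into one kernel-verified Lean document; each statement's English description precedes it below -/
import Mathlib

section
/- Let σ_I, σ_S ∈ ℝ², T > 0, r ∈ ℝ, σ_I ≠ σ_S, and ξ ~ N(0, I₂). Define b by ln b = −(‖σ_S − σ_I‖²/2)T + z_{δ/2}‖σ_S − σ_I‖√T, where z_p is the upper p-quantile of N(0,1) and δ ∈ (0,1). Then e^{−rT} E[ exp((r − ‖σ_I‖²/2)T + √T σ_I·ξ) · 1{ exp((r − ‖σ_S‖²/2)T + √T σ_S·ξ) / exp((r − ‖σ_I‖²/2)T + √T σ_I·ξ) ≥ b } ] = δ/2. -/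
open MeasureTheory ProbabilityTheory

/-- The standard Gaussian measure `N(0, I_d)` on `EuclideanSpace ℝ (Fin d)`. -/
noncomputable def stdGaussian (d : ℕ) : Measure (EuclideanSpace ℝ (Fin d)) :=
  (Measure.pi fun _ : Fin d => gaussianReal 0 1).map
    (EuclideanSpace.equiv (Fin d) ℝ).symm

/-- The standard normal distribution function `F`. -/
noncomputable def stdNormalCDF (x : ℝ) : ℝ := ((gaussianReal 0 1) (Set.Iic x)).toReal

/-!
Discounting the first asset gives `e^{-rT} S^I_T = exp (⟪a, ξ⟫ - ‖a‖² / 2)` with `a = √T • σ_I`,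
which is the Cameron–Martin density of the shift by `a`: taking `S^I` as numéraire amounts to
replacing `ξ` by `ξ + a`. After that shift
`log (S^S_T / S^I_T) = √T ⟪σ_S - σ_I, ξ⟫ - ‖σ_S - σ_I‖² T / 2`, so by the choice of `b` the
exercise event is `z ≤ ⟪u, ξ⟫` for the unit vector `u` along `σ_S - σ_I`.
As `⟪u, ξ⟫` is standard normal, its probability is `δ / 2`.
-/

open Real
open scoped ENNReal RealInnerProductSpace

section ProductWithDensity

variable {ι : Type*} [Fintype ι] {α : ι → Type*} [∀ i, MeasurableSpace (α i)]
  {μ : ∀ i, Measure (α i)} [∀ i, IsProbabilityMeasure (μ i)]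

theorem MeasureTheory.lintegral_fintype_prod_eq_prod {g : ∀ i, α i → ℝ≥0∞}
    (hg : ∀ i, Measurable (g i)) :
    ∫⁻ x, ∏ i, g i (x i) ∂Measure.pi μ = ∏ i, ∫⁻ y, g i y ∂μ i := by
  rw [lintegral_prod_eq_prod_lintegral_of_indepFun _ _
    (iIndepFun_pi fun i => (hg i).aemeasurable) fun i => (hg i).comp (measurable_pi_apply i)]
  exact Finset.prod_congr rfl fun i _ => (measurePreserving_eval μ i).lintegral_comp (hg i)

theorem MeasureTheory.Measure.pi_withDensity {g : ∀ i, α i → ℝ≥0∞} (hg : ∀ i, Measurable (g i))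
    [∀ i, SigmaFinite ((μ i).withDensity (g i))] :
    Measure.pi (fun i => (μ i).withDensity (g i)) =
      (Measure.pi μ).withDensity fun x => ∏ i, g i (x i) := by
  refine Measure.pi_eq fun s hs => ?_
  have hbox : (Set.univ.pi s).indicator (fun x => ∏ i, g i (x i)) =
      fun x => ∏ i, (s i).indicator (g i) (x i) := by
    classical
    ext x
    simp only [Set.indicator_apply, Finset.prod_ite_zero, Set.mem_univ_pi, Finset.mem_univ,
      true_imp_iff]
  rw [withDensity_apply _ (.univ_pi hs), ← lintegral_indicator (.univ_pi hs), hbox,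
    lintegral_fintype_prod_eq_prod fun i => (hg i).indicator (hs i)]
  exact Finset.prod_congr rfl fun i _ => by
    rw [withDensity_apply _ (hs i), lintegral_indicator (hs i)]

end ProductWithDensity

section StdGaussian

theorem gaussianPDFReal_mul_exp (a x : ℝ) :
    gaussianPDFReal 0 1 x * exp (a * x - a ^ 2 / 2) = gaussianPDFReal a 1 x := by
  simp only [gaussianPDFReal, NNReal.coe_one, mul_one, mul_assoc, ← exp_add]
  congr 2
  ring

theorem gaussianReal_withDensity_exp (a : ℝ) :
    (gaussianReal 0 1).withDensity (fun x => ENNReal.ofReal (exp (a * x - a ^ 2 / 2))) =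
      gaussianReal a 1 := by
  rw [gaussianReal_of_var_ne_zero _ one_ne_zero, gaussianReal_of_var_ne_zero _ one_ne_zero,
    ← withDensity_mul _ (measurable_gaussianPDF 0 1) (by fun_prop)]
  congr 1
  ext x
  simp only [Pi.mul_apply, gaussianPDF, ← ENNReal.ofReal_mul (gaussianPDFReal_nonneg _ _ _),
    gaussianPDFReal_mul_exp]

variable {ι : Type*} [Fintype ι]

theorem pi_gaussianReal_withDensity_exp (a : ι → ℝ) :
    (Measure.pi fun _ : ι => gaussianReal 0 1).withDensity
        (fun x => ENNReal.ofReal (exp (∑ i, (a i * x i - a i ^ 2 / 2)))) =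
      (Measure.pi fun _ : ι => gaussianReal 0 1).map (· + a) := by
  have hprod : (fun x : ι → ℝ => ENNReal.ofReal (exp (∑ i, (a i * x i - a i ^ 2 / 2)))) =
      fun x => ∏ i, ENNReal.ofReal (exp (a i * x i - a i ^ 2 / 2)) := by
    ext x
    rw [exp_sum, ENNReal.ofReal_prod_of_nonneg fun i _ => (exp_pos _).le]
  have hshift : (fun x : ι → ℝ => x + a) = fun x i => x i + a i := rfl
  rw [hprod, ← Measure.pi_withDensity (g := fun i x => ENNReal.ofReal (exp (a i * x - a i ^ 2 / 2)))
    fun i => by fun_prop, hshift,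
    Measure.pi_map_pi fun i => (measurable_add_const (a i)).aemeasurable]
  simp_rw [gaussianReal_withDensity_exp, gaussianReal_map_add_const, zero_add]

theorem inner_toLp_sub_norm_sq (a : EuclideanSpace ℝ ι) (x : ι → ℝ) :
    ⟪a, WithLp.toLp 2 x⟫ - ‖a‖ ^ 2 / 2 = ∑ i, (a i * x i - a i ^ 2 / 2) := by
  rw [EuclideanSpace.norm_sq_eq, PiLp.inner_apply, Finset.sum_sub_distrib, Finset.sum_div]
  simp [mul_comm]

theorem integral_exp_inner_mul_stdGaussian_euclideanSpace (a : EuclideanSpace ℝ ι)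
    (f : EuclideanSpace ℝ ι → ℝ) :
    ∫ ξ, exp (⟪a, ξ⟫ - ‖a‖ ^ 2 / 2) * f ξ ∂ProbabilityTheory.stdGaussian (EuclideanSpace ℝ ι) =
      ∫ ξ, f (ξ + a) ∂ProbabilityTheory.stdGaussian (EuclideanSpace ℝ ι) := by
  have htoLp : MeasurableEmbedding (WithLp.toLp 2 : (ι → ℝ) → EuclideanSpace ℝ ι) :=
    (MeasurableEquiv.toLp 2 (ι → ℝ)).measurableEmbedding
  rw [← map_pi_eq_stdGaussian, htoLp.integral_map, htoLp.integral_map]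
  calc ∫ x, exp (⟪a, WithLp.toLp 2 x⟫ - ‖a‖ ^ 2 / 2) * f (WithLp.toLp 2 x)
        ∂Measure.pi (fun _ : ι => gaussianReal 0 1)
      = ∫ x, f (WithLp.toLp 2 x) ∂(Measure.pi fun _ : ι => gaussianReal 0 1).withDensity
          (fun x => ENNReal.ofReal (exp (∑ i, (a i * x i - a i ^ 2 / 2)))) := by
        rw [integral_withDensity_eq_integral_toReal_smul (by fun_prop)
          (ae_of_all _ fun _ => ENNReal.ofReal_lt_top)]
        simp_rw [ENNReal.toReal_ofReal (exp_pos _).le, inner_toLp_sub_norm_sq, smul_eq_mul]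
    _ = ∫ x, f (WithLp.toLp 2 (x + WithLp.ofLp a)) ∂Measure.pi (fun _ : ι => gaussianReal 0 1) := by
        rw [pi_gaussianReal_withDensity_exp, (measurableEmbedding_addRight _).integral_map]

variable {E : Type*} [NormedAddCommGroup E] [InnerProductSpace ℝ E] [FiniteDimensional ℝ E]
  [MeasurableSpace E] [BorelSpace E]

theorem integral_exp_inner_mul_stdGaussian (a : E) (f : E → ℝ) :
    ∫ ξ, exp (⟪a, ξ⟫ - ‖a‖ ^ 2 / 2) * f ξ ∂ProbabilityTheory.stdGaussian E =
      ∫ ξ, f (ξ + a) ∂ProbabilityTheory.stdGaussian E := by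
  let e := (stdOrthonormalBasis ℝ E).repr
  have he : MeasurableEmbedding e.symm := e.symm.toHomeomorph.measurableEmbedding
  rw [← stdGaussian_map e.symm, he.integral_map, he.integral_map]
  simpa [LinearIsometryEquiv.inner_map_eq_flip] using
    integral_exp_inner_mul_stdGaussian_euclideanSpace (e a) (f ∘ e.symm)

theorem stdGaussian_map_inner {u : E} (hu : ‖u‖ = 1) :
    (ProbabilityTheory.stdGaussian E).map (fun ξ => ⟪u, ξ⟫) = gaussianReal 0 1 := by
  have h := IsGaussian.map_eq_gaussianReal (μ := ProbabilityTheory.stdGaussian E) (innerSL ℝ u)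
  rwa [integral_strongDual_stdGaussian, variance_dual_stdGaussian, innerSL_apply_norm, hu,
    one_pow, Real.toNNReal_one] at h

end StdGaussian

theorem stdGaussian_eq_stdGaussian_euclideanSpace (d : ℕ) :
    _root_.stdGaussian d = ProbabilityTheory.stdGaussian (EuclideanSpace ℝ (Fin d)) :=
  map_pi_eq_stdGaussian

section AssetPrice

variable {E : Type*} [NormedAddCommGroup E] [InnerProductSpace ℝ E]

/-- `S_T` for `S_0 = 1`, risk-neutral drift `r` and volatility vector `σ`, with `W_T = √T • ξ`. -/
noncomputable def assetPrice (σ : E) (r T : ℝ) (ξ : E) : ℝ :=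
  exp ((r - ‖σ‖ ^ 2 / 2) * T + √T * ⟪σ, ξ⟫)

theorem exp_neg_mul_assetPrice (σ ξ : E) {r T : ℝ} (hT : 0 ≤ T) :
    exp (-r * T) * assetPrice σ r T ξ = exp (⟪√T • σ, ξ⟫ - ‖√T • σ‖ ^ 2 / 2) := by
  rw [assetPrice, ← exp_add, real_inner_smul_left, norm_smul, mul_pow,
    norm_of_nonneg (sqrt_nonneg T), sq_sqrt hT]
  ring_nf

theorem assetPrice_div_assetPrice_add_smul (σS σI ξ : E) {r T : ℝ} (hT : 0 ≤ T) :
    assetPrice σS r T (ξ + √T • σI) / assetPrice σI r T (ξ + √T • σI) =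
      exp (√T * ⟪σS - σI, ξ⟫ - ‖σS - σI‖ ^ 2 / 2 * T) := by
  rw [assetPrice, assetPrice, ← exp_sub]
  congr 1
  simp only [inner_add_right, inner_sub_left, real_inner_smul_right, norm_sub_sq_real,
    real_inner_self_eq_norm_sq, real_inner_comm σI σS]
  linear_combination (⟪σI, σS⟫ - ‖σI‖ ^ 2) * mul_self_sqrt hT

theorem le_exp_iff_le_inner {v ξ : E} (hv : v ≠ 0) {T b z : ℝ} (hT : 0 < T) (hb : 0 < b)
    (hlnb : log b = -(‖v‖ ^ 2 / 2) * T + z * ‖v‖ * √T) :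
    b ≤ exp (√T * ⟪v, ξ⟫ - ‖v‖ ^ 2 / 2 * T) ↔ z ≤ ⟪‖v‖⁻¹ • v, ξ⟫ := by
  rw [← log_le_iff_le_exp hb, hlnb, real_inner_smul_left, le_inv_mul_iff₀ (norm_pos_iff.2 hv)]
  calc _ ↔ √T * (‖v‖ * z) ≤ √T * ⟪v, ξ⟫ := by constructor <;> intro h <;> linarith
    _ ↔ _ := mul_le_mul_iff_of_pos_left (sqrt_pos.2 hT)

end AssetPrice

theorem stmt4_general (σI σS : EuclideanSpace ℝ (Fin 2)) (hne : σI ≠ σS)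
    (T r δ z b : ℝ) (hT : 0 < T)
    -- z = z_{δ/2}, the upper δ/2-quantile of N(0,1): P(N(0,1) ≥ z) = δ/2
    (hz : ((gaussianReal 0 1) (Set.Ici z)).toReal = δ / 2)
    (hb : 0 < b)
    (hlnb : Real.log b = -(‖σS - σI‖ ^ 2 / 2) * T + z * ‖σS - σI‖ * Real.sqrt T) :
    Real.exp (-r * T) *
      ∫ ξ, Real.exp ((r - ‖σI‖ ^ 2 / 2) * T + Real.sqrt T * (inner ℝ σI ξ : ℝ)) *
        (if b ≤ Real.exp ((r - ‖σS‖ ^ 2 / 2) * T + Real.sqrt T * (inner ℝ σS ξ : ℝ)) /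
                Real.exp ((r - ‖σI‖ ^ 2 / 2) * T + Real.sqrt T * (inner ℝ σI ξ : ℝ))
         then (1 : ℝ) else 0) ∂(stdGaussian 2)
      = δ / 2 := by
  have hv : σS - σI ≠ 0 := sub_ne_zero.2 hne.symm
  set u := ‖σS - σI‖⁻¹ • (σS - σI)
  have hu : ‖u‖ = 1 := by
    rw [norm_smul, norm_inv, norm_norm, inv_mul_cancel₀ (norm_ne_zero_iff.2 hv)]
  have hevent (ξ) : b ≤ assetPrice σS r T (ξ + √T • σI) / assetPrice σI r T (ξ + √T • σI) ↔
      z ≤ ⟪u, ξ⟫ := by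
    rw [assetPrice_div_assetPrice_add_smul _ _ _ hT.le]
    exact le_exp_iff_le_inner hv hT hb hlnb
  change exp (-r * T) * ∫ ξ, assetPrice σI r T ξ *
    (if b ≤ assetPrice σS r T ξ / assetPrice σI r T ξ then (1 : ℝ) else 0) ∂stdGaussian 2 = δ / 2
  rw [stdGaussian_eq_stdGaussian_euclideanSpace, ← integral_const_mul]
  simp_rw [← mul_assoc, exp_neg_mul_assetPrice _ _ hT.le]
  rw [integral_exp_inner_mul_stdGaussian]
  simp_rw [hevent]
  calc _ = ∫ x, (Set.Ici z).indicator 1 x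
        ∂(ProbabilityTheory.stdGaussian _).map (fun ξ => ⟪u, ξ⟫) := by
        rw [integral_map (f := (Set.Ici z).indicator 1) (by fun_prop)
          (measurable_const.indicator measurableSet_Ici).aestronglyMeasurable]
        rfl
    _ = δ / 2 := by
      rw [stdGaussian_map_inner hu, integral_indicator_one measurableSet_Ici]
      exact hz

theorem stmt4 (σI σS : EuclideanSpace ℝ (Fin 2)) (hne : σI ≠ σS)
    (T r δ z b : ℝ) (hT : 0 < T) (hδ : δ ∈ Set.Ioo (0 : ℝ) 1)
    -- z = z_{δ/2}, the upper δ/2-quantile of N(0,1): P(N(0,1) ≥ z) = δ/2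
    (hz : ((gaussianReal 0 1) (Set.Ici z)).toReal = δ / 2)
    (hb : 0 < b)
    (hlnb : Real.log b = -(‖σS - σI‖ ^ 2 / 2) * T + z * ‖σS - σI‖ * Real.sqrt T) :
    Real.exp (-r * T) *
      ∫ ξ, Real.exp ((r - ‖σI‖ ^ 2 / 2) * T + Real.sqrt T * (inner ℝ σI ξ : ℝ)) *
        (if b ≤ Real.exp ((r - ‖σS‖ ^ 2 / 2) * T + Real.sqrt T * (inner ℝ σS ξ : ℝ)) /
                Real.exp ((r - ‖σI‖ ^ 2 / 2) * T + Real.sqrt T * (inner ℝ σI ξ : ℝ))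
         then (1 : ℝ) else 0) ∂(stdGaussian 2)
      = δ / 2 :=
  stmt4_general σI σS hne T r δ z b hT hz hb hlnb
end

section
/- Suppose that for constants C > 0, T > 0, real numbers μ_S, μ_I, r and vectors σ_S, σ_I ∈ ℝ^d with σ_I ≠ 0 we have |μ_I − r − ‖σ_I‖²| < C‖σ_I‖/√T and |μ_S − r − σ_S·σ_I| < C(‖σ_I‖ + ‖σ_S − σ_I‖)/√T. Then |μ_S − r − (σ_S·σ_I/‖σ_I‖²)(μ_I − r)| ≤ C(‖σ_I‖ + ‖σ_S‖ + ‖σ_S − σ_I‖)/√T. -/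
/-!
Write `β = ⟪σS, σI⟫ / ‖σI‖²`. Since `β ‖σI‖² = ⟪σS, σI⟫`, the error `μS - r - β (μI - r)` splits as
`(μS - r - ⟪σS, σI⟫) - β (μI - r - ‖σI‖²)`, and by Cauchy–Schwarz `|β| ‖σI‖ ≤ ‖σS‖`, so the second
error term costs at most `C ‖σS‖ / √T`.
-/

open scoped RealInnerProductSpace

section InnerProductSpace

variable {E : Type*} [NormedAddCommGroup E] [InnerProductSpace ℝ E]

theorem inner_div_norm_sq_mul_norm_sq (s i : E) : ⟪s, i⟫ / ‖i‖ ^ 2 * ‖i‖ ^ 2 = ⟪s, i⟫ :=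
  div_mul_cancel_of_imp fun h => by simp_all

theorem abs_inner_div_norm_sq_mul_norm_le (s i : E) : |⟪s, i⟫ / ‖i‖ ^ 2| * ‖i‖ ≤ ‖s‖ := by
  rcases eq_or_ne i 0 with rfl | hi
  · simp
  replace hi : 0 < ‖i‖ := norm_pos_iff.mpr hi
  calc |⟪s, i⟫ / ‖i‖ ^ 2| * ‖i‖ = |⟪s, i⟫| / ‖i‖ := by
        rw [abs_div, abs_of_pos (pow_pos hi 2)]; field_simp
    _ ≤ ‖s‖ := div_le_of_le_mul₀ hi.le (norm_nonneg s) (abs_real_inner_le_norm s i)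

theorem abs_sub_inner_div_norm_sq_mul_le {s i : E} {x y a b : ℝ} (hb : 0 ≤ b)
    (hx : |x - ⟪s, i⟫| ≤ a) (hy : |y - ‖i‖ ^ 2| ≤ b * ‖i‖) :
    |x - ⟪s, i⟫ / ‖i‖ ^ 2 * y| ≤ a + b * ‖s‖ := by
  set β := ⟪s, i⟫ / ‖i‖ ^ 2
  have hsplit : x - β * y = (x - ⟪s, i⟫) - β * (y - ‖i‖ ^ 2) := by
    rw [mul_sub, inner_div_norm_sq_mul_norm_sq]; ring
  calc |x - β * y| ≤ |x - ⟪s, i⟫| + |β| * |y - ‖i‖ ^ 2| := by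
        rw [hsplit, ← abs_mul]; exact abs_sub _ _
    _ ≤ a + |β| * (b * ‖i‖) := by gcongr
    _ = a + b * (|β| * ‖i‖) := by ring
    _ ≤ a + b * ‖s‖ := by gcongr; exact abs_inner_div_norm_sq_mul_norm_le s i

end InnerProductSpace

theorem stmt10_general {d : ℕ} (μS μI r C T : ℝ) (hC : 0 < C)
    (σS σI : EuclideanSpace ℝ (Fin d))
    (h1 : |μI - r - ‖σI‖ ^ 2| < C * ‖σI‖ / Real.sqrt T)
    (h2 : |μS - r - (inner ℝ σS σI : ℝ)| < C * (‖σI‖ + ‖σS - σI‖) / Real.sqrt T) :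
    |μS - r - ((inner ℝ σS σI : ℝ) / ‖σI‖ ^ 2) * (μI - r)|
      ≤ C * (‖σI‖ + ‖σS‖ + ‖σS - σI‖) / Real.sqrt T := by
  have h1' : |μI - r - ‖σI‖ ^ 2| ≤ C / Real.sqrt T * ‖σI‖ := by
    rw [div_mul_eq_mul_div]; exact h1.le
  calc _ ≤ C * (‖σI‖ + ‖σS - σI‖) / Real.sqrt T + C / Real.sqrt T * ‖σS‖ :=
        abs_sub_inner_div_norm_sq_mul_le (by positivity) h2.le h1'
    _ = C * (‖σI‖ + ‖σS‖ + ‖σS - σI‖) / Real.sqrt T := by ring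

theorem stmt10 {d : ℕ} (μS μI r C T : ℝ) (hC : 0 < C) (hT : 0 < T)
    (σS σI : EuclideanSpace ℝ (Fin d)) (hσI : σI ≠ 0)
    (h1 : |μI - r - ‖σI‖ ^ 2| < C * ‖σI‖ / Real.sqrt T)
    (h2 : |μS - r - (inner ℝ σS σI : ℝ)| < C * (‖σI‖ + ‖σS - σI‖) / Real.sqrt T) :
    |μS - r - ((inner ℝ σS σI : ℝ) / ‖σI‖ ^ 2) * (μI - r)|
      ≤ C * (‖σI‖ + ‖σS‖ + ‖σS - σI‖) / Real.sqrt T :=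
  stmt10_general μS μI r C T hC σS σI h1 h2
end
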